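/- arXiv:1905.02519 — 3 statements merged into one kernel-verified Lean document; each statement's English description precedes it below -/
import Mathlib

section
/- Let X = ⨆_{λ∈Λ} G_λ be a multiple conjugation quandle, R a ring, and let f₁, f₂ : X × X → R and f₃, f₄ : ⨆_{λ∈Λ} (G_λ × G_λ) → R be maps. If the set ⨆_{λ∈Λ} (G_λ × R) with operations (x,u) ◁ (y,v) = (x ◁ y, f₁(x,y)u + f₂(x,y)v) and, on each G_λ × R, (a,u)(b,v) = (ab, f₃(a,b)u + f₄(a,b)v), is a multiple conjugation quandle (where R is regarded as a left R-module over itself), then f₁, f₂, f₃, f₄ satisfy conditions (0-i)–(4-iii). -/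
universe u v w x u' v'

/-- The raw data of a disjoint union of "groups" `G l` (with multiplication `mul`,
identity `one` and inversion `inv` on each component) together with a binary
operation `op` on the disjoint union `Σ l, G l`. -/
structure MCQData (Λ : Type u) (G : Λ → Type v) where
  mul : ∀ l : Λ, G l → G l → G l
  one : ∀ l : Λ, G l
  inv : ∀ l : Λ, G l → G l
  op  : (Σ l, G l) → (Σ l, G l) → (Σ l, G l)

namespace MCQData

variable {Λ : Type u} {G : Λ → Type v}

/-- Each component `G l` is a group with respect to the given data. -/
def IsGroupData (D : MCQData Λ G) : Prop :=
  (∀ (l : Λ) (a b c : G l), D.mul l (D.mul l a b) c = D.mul l a (D.mul l b c)) ∧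
  (∀ (l : Λ) (a : G l), D.mul l (D.one l) a = a) ∧
  (∀ (l : Λ) (a : G l), D.mul l a (D.one l) = a) ∧
  (∀ (l : Λ) (a : G l), D.mul l (D.inv l a) a = D.one l) ∧
  (∀ (l : Λ) (a : G l), D.mul l a (D.inv l a) = D.one l)

/-- `D` is a multiple conjugation quandle (MCQ): each component is a group,
the operation restricts to conjugation on each component, and the axioms of an
MCQ hold.  In the last axiom, `a ◁ x` and `b ◁ x` lie in a common component
`G m` and `(ab) ◁ x = (a ◁ x)(b ◁ x)` there. -/
def IsMCQ (D : MCQData Λ G) : Prop :=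
  D.IsGroupData ∧
  (∀ (l : Λ) (a b : G l),
    D.op ⟨l, a⟩ ⟨l, b⟩ = ⟨l, D.mul l (D.mul l (D.inv l b) a) b⟩) ∧
  (∀ (x : Σ l, G l) (l : Λ), D.op x ⟨l, D.one l⟩ = x) ∧
  (∀ (x : Σ l, G l) (l : Λ) (a b : G l),
    D.op x ⟨l, D.mul l a b⟩ = D.op (D.op x ⟨l, a⟩) ⟨l, b⟩) ∧
  (∀ x y z : Σ l, G l, D.op (D.op x y) z = D.op (D.op x z) (D.op y z)) ∧
  (∀ (l : Λ) (a b : G l) (x : Σ l, G l), ∃ (m : Λ) (a' b' : G m),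
    D.op ⟨l, a⟩ x = ⟨m, a'⟩ ∧ D.op ⟨l, b⟩ x = ⟨m, b'⟩ ∧
    D.op ⟨l, D.mul l a b⟩ x = ⟨m, D.mul m a' b'⟩)

/-- `(f₁, f₂)` is an MCQ Alexander pair for the MCQ `D` with values in the ring `R`. -/
def IsMCQAlexanderPair (D : MCQData Λ G) {R : Type w} [Ring R]
    (f₁ f₂ : (Σ l, G l) → (Σ l, G l) → R) : Prop :=
  (∀ (l : Λ) (a b : G l),
    f₁ ⟨l, a⟩ ⟨l, b⟩ + f₂ ⟨l, a⟩ ⟨l, b⟩ = f₁ ⟨l, a⟩ ⟨l, D.mul l (D.inv l a) b⟩) ∧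
  (∀ (l : Λ) (a b : G l) (x : Σ l, G l), f₁ ⟨l, a⟩ x = f₁ ⟨l, b⟩ x) ∧
  (∀ (l : Λ) (a b : G l) (x : Σ l, G l),
    f₂ ⟨l, D.mul l a b⟩ x =
      f₂ ⟨l, a⟩ x + f₁ (D.op ⟨l, b⟩ x) (D.op ⟨l, D.inv l a⟩ x) * f₂ ⟨l, b⟩ x) ∧
  (∀ (x : Σ l, G l) (l : Λ), f₁ x ⟨l, D.one l⟩ = 1) ∧
  (∀ (x : Σ l, G l) (l : Λ) (a b : G l),
    f₁ x ⟨l, D.mul l a b⟩ = f₁ (D.op x ⟨l, a⟩) ⟨l, b⟩ * f₁ x ⟨l, a⟩) ∧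
  (∀ (x : Σ l, G l) (l : Λ) (a b : G l),
    f₂ x ⟨l, D.mul l a b⟩ = f₁ (D.op x ⟨l, a⟩) ⟨l, b⟩ * f₂ x ⟨l, a⟩) ∧
  (∀ x y z : Σ l, G l, f₁ (D.op x y) z * f₁ x y = f₁ (D.op x z) (D.op y z) * f₁ x z) ∧
  (∀ x y z : Σ l, G l, f₁ (D.op x y) z * f₂ x y = f₂ (D.op x z) (D.op y z) * f₁ y z) ∧
  (∀ x y z : Σ l, G l, f₂ (D.op x y) z =
    f₁ (D.op x z) (D.op y z) * f₂ x z + f₂ (D.op x z) (D.op y z) * f₂ y z)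

/-- An MCQ homomorphism: `φ` preserves the operation `◁`, and for `a, b` in a common
component, `φ a`, `φ b` lie in a common component and `φ (ab) = (φ a)(φ b)`. -/
def IsMCQHom {Λ' : Type u'} {G' : Λ' → Type v'} (D : MCQData Λ G)
    (D' : MCQData Λ' G') (φ : (Σ l, G l) → (Σ l', G' l')) : Prop :=
  (∀ x y : Σ l, G l, φ (D.op x y) = D'.op (φ x) (φ y)) ∧
  (∀ (l : Λ) (a b : G l), ∃ (m : Λ') (a' b' : G' m),
    φ ⟨l, a⟩ = ⟨m, a'⟩ ∧ φ ⟨l, b⟩ = ⟨m, b'⟩ ∧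
    φ ⟨l, D.mul l a b⟩ = ⟨m, D'.mul m a' b'⟩)

/-- Conditions (0-i)--(0-iv) for the maps `f₃, f₄ : ⨆ (G l × G l) → R`. -/
def Conds0 (D : MCQData Λ G) {R : Type w} [Ring R]
    (f₃ f₄ : ∀ l : Λ, G l → G l → R) : Prop :=
  (∀ (l : Λ) (a b : G l), IsUnit (f₃ l a b) ∧ IsUnit (f₄ l a b)) ∧
  (∀ (l : Λ) (a b c : G l), f₃ l (D.mul l a b) c * f₃ l a b = f₃ l a (D.mul l b c)) ∧
  (∀ (l : Λ) (a b c : G l),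
    f₃ l (D.mul l a b) c * f₄ l a b = f₄ l a (D.mul l b c) * f₃ l b c) ∧
  (∀ (l : Λ) (a b c : G l), f₄ l (D.mul l a b) c = f₄ l a (D.mul l b c) * f₄ l b c)

/-- Conditions (0-i)--(4-iii) for the quadruple `(f₁, f₂, f₃, f₄)`.
In conditions (4-i)--(4-iii), the decompositions `a ◁ x = ⟨m, a'⟩` and
`b ◁ x = ⟨m, b'⟩` express that `a ◁ x` and `b ◁ x` lie in a common component `G m`. -/
def Conds (D : MCQData Λ G) {R : Type w} [Ring R]
    (f₁ f₂ : (Σ l, G l) → (Σ l, G l) → R) (f₃ f₄ : ∀ l : Λ, G l → G l → R) : Prop :=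
  Conds0 D f₃ f₄ ∧
  (∀ (l : Λ) (a b : G l),
    f₁ ⟨l, a⟩ ⟨l, b⟩ = f₄ l (D.inv l b) (D.mul l a b) * f₃ l a b) ∧
  (∀ (l : Λ) (a b : G l),
    f₂ ⟨l, a⟩ ⟨l, b⟩ =
      -(f₃ l (D.inv l b) (D.mul l a b) * f₄ l (D.inv l b) (D.one l) * f₃ l b (D.inv l b)) +
        f₄ l (D.inv l b) (D.mul l a b) * f₄ l a b) ∧
  (∀ (x : Σ l, G l) (l : Λ), f₁ x ⟨l, D.one l⟩ = 1) ∧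
  (∀ (x : Σ l, G l) (l : Λ) (a b : G l),
    f₁ x ⟨l, D.mul l a b⟩ = f₁ (D.op x ⟨l, a⟩) ⟨l, b⟩ * f₁ x ⟨l, a⟩) ∧
  (∀ (x : Σ l, G l) (l : Λ) (a b : G l),
    f₂ x ⟨l, D.mul l a b⟩ * f₃ l a b = f₁ (D.op x ⟨l, a⟩) ⟨l, b⟩ * f₂ x ⟨l, a⟩) ∧
  (∀ (x : Σ l, G l) (l : Λ) (a b : G l),
    f₂ x ⟨l, D.mul l a b⟩ * f₄ l a b = f₂ (D.op x ⟨l, a⟩) ⟨l, b⟩) ∧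
  (∀ x y z : Σ l, G l, f₁ (D.op x y) z * f₁ x y = f₁ (D.op x z) (D.op y z) * f₁ x z) ∧
  (∀ x y z : Σ l, G l, f₁ (D.op x y) z * f₂ x y = f₂ (D.op x z) (D.op y z) * f₁ y z) ∧
  (∀ x y z : Σ l, G l, f₂ (D.op x y) z =
    f₁ (D.op x z) (D.op y z) * f₂ x z + f₂ (D.op x z) (D.op y z) * f₂ y z) ∧
  (∀ (l : Λ) (a b : G l) (x : Σ l, G l) (m : Λ) (a' b' : G m),
    D.op ⟨l, a⟩ x = ⟨m, a'⟩ → D.op ⟨l, b⟩ x = ⟨m, b'⟩ →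
      f₁ ⟨l, D.mul l a b⟩ x * f₃ l a b = f₃ m a' b' * f₁ ⟨l, a⟩ x) ∧
  (∀ (l : Λ) (a b : G l) (x : Σ l, G l) (m : Λ) (a' b' : G m),
    D.op ⟨l, a⟩ x = ⟨m, a'⟩ → D.op ⟨l, b⟩ x = ⟨m, b'⟩ →
      f₁ ⟨l, D.mul l a b⟩ x * f₄ l a b = f₄ m a' b' * f₁ ⟨l, b⟩ x) ∧
  (∀ (l : Λ) (a b : G l) (x : Σ l, G l) (m : Λ) (a' b' : G m),
    D.op ⟨l, a⟩ x = ⟨m, a'⟩ → D.op ⟨l, b⟩ x = ⟨m, b'⟩ →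
      f₂ ⟨l, D.mul l a b⟩ x = f₃ m a' b' * f₂ ⟨l, a⟩ x + f₄ m a' b' * f₂ ⟨l, b⟩ x)

/-- The multiplication `(a,u)(b,v) = (ab, f₃(a,b)u + f₄(a,b)v)` on `G l × M`. -/
def quadMul (D : MCQData Λ G) {R : Type w} [Ring R] (f₃ f₄ : ∀ l : Λ, G l → G l → R)
    (M : Type x) [AddCommGroup M] [Module R M] (l : Λ) (p q : G l × M) : G l × M :=
  (D.mul l p.1 q.1, f₃ l p.1 q.1 • p.2 + f₄ l p.1 q.1 • q.2)

/-- The operation `(x,u) ◁ (y,v) = (x ◁ y, f₁(x,y)u + f₂(x,y)v)` on `⨆ (G l × M)`. -/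
def quadOp (D : MCQData Λ G) {R : Type w} [Ring R]
    (f₁ f₂ : (Σ l, G l) → (Σ l, G l) → R) (M : Type x) [AddCommGroup M] [Module R M]
    (z w : Σ l, G l × M) : Σ l, G l × M :=
  ⟨(D.op ⟨z.1, z.2.1⟩ ⟨w.1, w.2.1⟩).1,
    ((D.op ⟨z.1, z.2.1⟩ ⟨w.1, w.2.1⟩).2,
      f₁ ⟨z.1, z.2.1⟩ ⟨w.1, w.2.1⟩ • z.2.2 + f₂ ⟨z.1, z.2.1⟩ ⟨w.1, w.2.1⟩ • w.2.2)⟩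

/-- The data `X̃(f₁,f₂,f₃,f₄)` on `⨆ (G l × M)`. -/
def quadExt (D : MCQData Λ G) {R : Type w} [Ring R]
    (f₁ f₂ : (Σ l, G l) → (Σ l, G l) → R) (f₃ f₄ : ∀ l : Λ, G l → G l → R)
    (M : Type x) [AddCommGroup M] [Module R M] : MCQData Λ (fun l => G l × M) where
  mul := quadMul D f₃ f₄ M
  one l := (D.one l, 0)
  inv l p := (D.inv l p.1, -((f₄ l (D.inv l p.1) (D.one l) * f₃ l p.1 (D.inv l p.1)) • p.2))
  op := quadOp D f₁ f₂ M

/-- The multiplication `(a,u)(b,v) = (ab, u + f₁(a,a⁻¹)v)` on `G l × M`. -/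
def alexMul (D : MCQData Λ G) {R : Type w} [Ring R]
    (f₁ : (Σ l, G l) → (Σ l, G l) → R) (M : Type x) [AddCommGroup M] [Module R M]
    (l : Λ) (p q : G l × M) : G l × M :=
  (D.mul l p.1 q.1, p.2 + f₁ ⟨l, p.1⟩ ⟨l, D.inv l p.1⟩ • q.2)

/-- The data `X̃(f₁,f₂)` on `⨆ (G l × M)`, with identity `(e_l, 0)` and
inverse `(a,u)⁻¹ = (a⁻¹, -f₁(a,a)u)` on each component. -/
def alexExt (D : MCQData Λ G) {R : Type w} [Ring R]
    (f₁ f₂ : (Σ l, G l) → (Σ l, G l) → R) (M : Type x) [AddCommGroup M] [Module R M] :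
    MCQData Λ (fun l => G l × M) where
  mul := alexMul D f₁ M
  one l := (D.one l, 0)
  inv l p := (D.inv l p.1, -(f₁ ⟨l, p.1⟩ ⟨l, p.1⟩ • p.2))
  op := quadOp D f₁ f₂ M

/-- `(m, o, i)` satisfies the group axioms on `α`. -/
def GroupAxiomsOn {α : Type x} (m : α → α → α) (o : α) (i : α → α) : Prop :=
  (∀ a b c : α, m (m a b) c = m a (m b c)) ∧ (∀ a : α, m o a = a) ∧ (∀ a : α, m a o = a) ∧
  (∀ a : α, m (i a) a = o) ∧ (∀ a : α, m a (i a) = o)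

/-- The relation `(f₁,f₂,f₃,f₄) ∼ (g₁,g₂,g₃,g₄)`, witnessed by a map `h : X → Rˣ`. -/
def QuadRel (D : MCQData Λ G) {R : Type w} [Ring R]
    (f₁ f₂ g₁ g₂ : (Σ l, G l) → (Σ l, G l) → R)
    (f₃ f₄ g₃ g₄ : ∀ l : Λ, G l → G l → R) : Prop :=
  ∃ h : (Σ l, G l) → Rˣ,
    (∀ x y : Σ l, G l, (h (D.op x y) : R) * f₁ x y = g₁ x y * (h x : R)) ∧
    (∀ x y : Σ l, G l, (h (D.op x y) : R) * f₂ x y = g₂ x y * (h y : R)) ∧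
    (∀ (l : Λ) (a b : G l),
      (h ⟨l, D.mul l a b⟩ : R) * f₃ l a b = g₃ l a b * (h ⟨l, a⟩ : R)) ∧
    (∀ (l : Λ) (a b : G l),
      (h ⟨l, D.mul l a b⟩ : R) * f₄ l a b = g₄ l a b * (h ⟨l, b⟩ : R))

end MCQData


/-!
Every axiom of the extended MCQ, read in the second coordinate, is an identity between
expressions that are left `R`-linear in the `R`-entries of the elements involved; evaluating it
at the standard basis vectors of `R³` (or `R²`) yields the conditions one coefficient at a time.
The group axioms on `G_λ × R` first force the identity to be `(e_λ, 0)` and the inverse to be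
`(a, u)⁻¹ = (a⁻¹, -f₄(a⁻¹, e_λ) f₃(a, a⁻¹) u)`, which is what turns the conjugation axiom into
(1-i) and (1-ii).
-/

namespace MCQData

variable {Λ : Type u} {G : Λ → Type v} {R : Type w} [Ring R] {D : MCQData Λ G}
  {f₁ f₂ : (Σ l, G l) → (Σ l, G l) → R} {f₃ f₄ : ∀ l : Λ, G l → G l → R}

theorem IsGroupData.inv_mul_cancel_left (hD : D.IsGroupData) (l : Λ) (a b : G l) :
    D.mul l (D.inv l a) (D.mul l a b) = b := by
  rw [← hD.1, hD.2.2.2.1, hD.2.1]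

theorem IsGroupData.mul_inv_cancel_right (hD : D.IsGroupData) (l : Λ) (a b : G l) :
    D.mul l (D.mul l a b) (D.inv l b) = a := by
  rw [hD.1, hD.2.2.2.2, hD.2.2.1]

section QuadMul

variable {l : Λ}

theorem f₃_cocycle (h : Std.Associative (quadMul D f₃ f₄ R l)) (a b c : G l) :
    f₃ l (D.mul l a b) c * f₃ l a b = f₃ l a (D.mul l b c) := by
  simpa [quadMul] using congrArg Prod.snd (h.assoc (a, 1) (b, 0) (c, 0))

theorem f₃_f₄_cocycle (h : Std.Associative (quadMul D f₃ f₄ R l)) (a b c : G l) :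
    f₃ l (D.mul l a b) c * f₄ l a b = f₄ l a (D.mul l b c) * f₃ l b c := by
  simpa [quadMul] using congrArg Prod.snd (h.assoc (a, 0) (b, 1) (c, 0))

theorem f₄_cocycle (h : Std.Associative (quadMul D f₃ f₄ R l)) (a b c : G l) :
    f₄ l (D.mul l a b) c = f₄ l a (D.mul l b c) * f₄ l b c := by
  simpa [quadMul] using congrArg Prod.snd (h.assoc (a, 0) (b, 0) (c, 1))

theorem f₄_fst_eq_one_of_left_id {e : G l × R} (he : ∀ p, quadMul D f₃ f₄ R l e p = p)
    (a : G l) : f₄ l e.1 a = 1 := by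
  have h₀ := congrArg Prod.snd (he (a, 0))
  have h₁ := congrArg Prod.snd (he (a, 1))
  simp only [quadMul, smul_eq_mul, mul_zero, add_zero, mul_one] at h₀ h₁
  rwa [h₀, zero_add] at h₁

theorem f₃_fst_eq_one_of_right_id {e : G l × R} (he : ∀ p, quadMul D f₃ f₄ R l p e = p)
    (a : G l) : f₃ l a e.1 = 1 := by
  have h₀ := congrArg Prod.snd (he (a, 0))
  have h₁ := congrArg Prod.snd (he (a, 1))
  simp only [quadMul, smul_eq_mul, mul_zero, zero_add, mul_one] at h₀ h₁
  rwa [h₀, add_zero] at h₁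

end QuadMul

section GroupData

variable {o : ∀ l : Λ, G l × R} {i : ∀ l : Λ, G l × R → G l × R}
  {op : (Σ l, G l × R) → (Σ l, G l × R) → (Σ l, G l × R)}

theorem fst_one_eq (hD : D.IsGroupData) (hE : (mk (quadMul D f₃ f₄ R) o i op).IsGroupData)
    (l : Λ) : (o l).1 = D.one l :=
  (hD.2.2.1 l _).symm.trans (congrArg Prod.fst (hE.2.1 l (D.one l, 0)))

theorem f₄_one_left (hD : D.IsGroupData) (hE : (mk (quadMul D f₃ f₄ R) o i op).IsGroupData)
    (l : Λ) (a : G l) : f₄ l (D.one l) a = 1 :=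
  fst_one_eq hD hE l ▸ f₄_fst_eq_one_of_left_id (hE.2.1 l) a

theorem f₃_one_right (hD : D.IsGroupData) (hE : (mk (quadMul D f₃ f₄ R) o i op).IsGroupData)
    (l : Λ) (a : G l) : f₃ l a (D.one l) = 1 :=
  fst_one_eq hD hE l ▸ f₃_fst_eq_one_of_right_id (hE.2.2.1 l) a

theorem one_eq (hD : D.IsGroupData) (hE : (mk (quadMul D f₃ f₄ R) o i op).IsGroupData)
    (l : Λ) : o l = (D.one l, 0) := by
  have h := congrArg Prod.snd (hE.2.2.1 l (D.one l, 0))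
  simp only [quadMul, smul_eq_mul, mul_zero, zero_add, fst_one_eq hD hE,
    f₄_one_left hD hE, one_mul] at h
  exact Prod.ext (fst_one_eq hD hE l) h

theorem f₄_inv_mul_mul_f₄ (hD : D.IsGroupData)
    (hE : (mk (quadMul D f₃ f₄ R) o i op).IsGroupData) (l : Λ) (b c : G l) :
    f₄ l (D.inv l b) (D.mul l b c) * f₄ l b c = 1 := by
  rw [← f₄_cocycle ⟨hE.1 l⟩, hD.2.2.2.1, f₄_one_left hD hE]

theorem f₄_mul_f₄_inv_mul (hD : D.IsGroupData)
    (hE : (mk (quadMul D f₃ f₄ R) o i op).IsGroupData) (l : Λ) (b c : G l) :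
    f₄ l b c * f₄ l (D.inv l b) (D.mul l b c) = 1 := by
  have h := f₄_cocycle ⟨hE.1 l⟩ b (D.inv l b) (D.mul l b c)
  rwa [hD.2.2.2.2, f₄_one_left hD hE, hD.inv_mul_cancel_left, eq_comm] at h

theorem f₃_mul_inv_mul_f₃ (hD : D.IsGroupData)
    (hE : (mk (quadMul D f₃ f₄ R) o i op).IsGroupData) (l : Λ) (a b : G l) :
    f₃ l (D.mul l a b) (D.inv l b) * f₃ l a b = 1 := by
  rw [f₃_cocycle ⟨hE.1 l⟩, hD.2.2.2.2, f₃_one_right hD hE]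

theorem f₃_mul_f₃_mul_inv (hD : D.IsGroupData)
    (hE : (mk (quadMul D f₃ f₄ R) o i op).IsGroupData) (l : Λ) (a b : G l) :
    f₃ l a b * f₃ l (D.mul l a b) (D.inv l b) = 1 := by
  have h := f₃_cocycle ⟨hE.1 l⟩ (D.mul l a b) (D.inv l b) b
  rwa [hD.mul_inv_cancel_right, hD.2.2.2.1, f₃_one_right hD hE] at h

theorem conds0_of_isGroupData (hD : D.IsGroupData)
    (hE : (mk (quadMul D f₃ f₄ R) o i op).IsGroupData) : Conds0 D f₃ f₄ :=
  ⟨fun l a b =>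
    ⟨(Units.mk _ _ (f₃_mul_f₃_mul_inv hD hE l a b) (f₃_mul_inv_mul_f₃ hD hE l a b)).isUnit,
      (Units.mk _ _ (f₄_mul_f₄_inv_mul hD hE l a b) (f₄_inv_mul_mul_f₄ hD hE l a b)).isUnit⟩,
    fun l => f₃_cocycle ⟨hE.1 l⟩, fun l => f₃_f₄_cocycle ⟨hE.1 l⟩, fun l => f₄_cocycle ⟨hE.1 l⟩⟩

theorem inv_eq (hD : D.IsGroupData) (hE : (mk (quadMul D f₃ f₄ R) o i op).IsGroupData)
    (l : Λ) (p : G l × R) :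
    i l p = (D.inv l p.1, -((f₄ l (D.inv l p.1) (D.one l) * f₃ l p.1 (D.inv l p.1)) • p.2)) := by
  obtain ⟨b, v⟩ := p
  have h := hE.2.2.2.2 l (b, v)
  simp only [one_eq hD hE] at h
  have h₁ : (i l (b, v)).1 = D.inv l b := by
    have h' : D.mul l b (i l (b, v)).1 = D.one l := congrArg Prod.fst h
    rw [← hD.inv_mul_cancel_left l b (i l (b, v)).1, h', hD.2.2.1]
  have h₂ : f₃ l b (D.inv l b) * v + f₄ l b (D.inv l b) * (i l (b, v)).2 = 0 := by
    simpa [quadMul, h₁] using congrArg Prod.snd h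
  have hf₄ : f₄ l (D.inv l b) (D.one l) * f₄ l b (D.inv l b) = 1 := by
    simpa [hD.2.2.2.2] using f₄_inv_mul_mul_f₄ hD hE l b (D.inv l b)
  refine Prod.ext h₁ ?_
  calc (i l (b, v)).2
      = f₄ l (D.inv l b) (D.one l) * (f₄ l b (D.inv l b) * (i l (b, v)).2) := by
        rw [← mul_assoc, hf₄, one_mul]
    _ = -((f₄ l (D.inv l b) (D.one l) * f₃ l b (D.inv l b)) * v) := by
        rw [eq_neg_of_add_eq_zero_right h₂, mul_neg, mul_assoc]

theorem mk_quadMul_eq_quadExt (hD : D.IsGroupData)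
    (hE : (mk (quadMul D f₃ f₄ R) o i (quadOp D f₁ f₂ R)).IsGroupData) :
    mk (quadMul D f₃ f₄ R) o i (quadOp D f₁ f₂ R) = quadExt D f₁ f₂ f₃ f₄ R := by
  obtain rfl : o = fun l => (D.one l, 0) := funext (one_eq hD hE)
  obtain rfl : i = fun l p =>
      (D.inv l p.1, -((f₄ l (D.inv l p.1) (D.one l) * f₃ l p.1 (D.inv l p.1)) • p.2)) :=
    funext fun l => funext (inv_eq hD hE l)
  rfl

end GroupData

theorem conds1_of_op_conj (h0 : Conds0 D f₃ f₄)
    (hconj : ∀ (l : Λ) (p q : G l × R), quadOp D f₁ f₂ R ⟨l, p⟩ ⟨l, q⟩ =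
      ⟨l, quadMul D f₃ f₄ R l
        (quadMul D f₃ f₄ R l ((quadExt D f₁ f₂ f₃ f₄ R).inv l q) p) q⟩) :
    (∀ (l : Λ) (a b : G l),
      f₁ ⟨l, a⟩ ⟨l, b⟩ = f₄ l (D.inv l b) (D.mul l a b) * f₃ l a b) ∧
    (∀ (l : Λ) (a b : G l),
      f₂ ⟨l, a⟩ ⟨l, b⟩ =
        -(f₃ l (D.inv l b) (D.mul l a b) * f₄ l (D.inv l b) (D.one l) *
          f₃ l b (D.inv l b)) + f₄ l (D.inv l b) (D.mul l a b) * f₄ l a b) := by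
  obtain ⟨-, hf₃, hf₃f₄, hf₄⟩ := h0
  have key (l : Λ) (a b : G l) (u v : R) := congrArg (fun z => z.2.2) (hconj l (a, u) (b, v))
  refine ⟨fun l a b => ?_, fun l a b => ?_⟩
  · have h := key l a b 1 0
    simp only [quadOp, quadMul, quadExt, smul_eq_mul, mul_one, mul_zero, add_zero, neg_zero,
      zero_add] at h
    rw [h, hf₃f₄]
  · have h := key l a b 0 1
    simp only [quadOp, quadMul, quadExt, smul_eq_mul, mul_one, mul_zero, add_zero, zero_add,
      mul_neg] at h
    rw [h, ← mul_assoc, ← mul_assoc, hf₃, hf₄]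

theorem f₁_one_right
    (hid : ∀ (x : Σ l, G l × R) (l : Λ), quadOp D f₁ f₂ R x ⟨l, (D.one l, 0)⟩ = x)
    (x : Σ l, G l) (l : Λ) : f₁ x ⟨l, D.one l⟩ = 1 := by
  simpa [quadOp] using congrArg (fun z => z.2.2) (hid ⟨x.1, (x.2, 1)⟩ l)

theorem conds2_of_op_mul (hact : ∀ (x : Σ l, G l × R) (l : Λ) (p q : G l × R),
      quadOp D f₁ f₂ R x ⟨l, quadMul D f₃ f₄ R l p q⟩ =
        quadOp D f₁ f₂ R (quadOp D f₁ f₂ R x ⟨l, p⟩) ⟨l, q⟩) :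
    (∀ (x : Σ l, G l) (l : Λ) (a b : G l),
      f₁ x ⟨l, D.mul l a b⟩ = f₁ (D.op x ⟨l, a⟩) ⟨l, b⟩ * f₁ x ⟨l, a⟩) ∧
    (∀ (x : Σ l, G l) (l : Λ) (a b : G l),
      f₂ x ⟨l, D.mul l a b⟩ * f₃ l a b = f₁ (D.op x ⟨l, a⟩) ⟨l, b⟩ * f₂ x ⟨l, a⟩) ∧
    (∀ (x : Σ l, G l) (l : Λ) (a b : G l),
      f₂ x ⟨l, D.mul l a b⟩ * f₄ l a b = f₂ (D.op x ⟨l, a⟩) ⟨l, b⟩) := by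
  have key (x : Σ l, G l) (l : Λ) (a b : G l) (w u v : R) :=
    congrArg (fun z => z.2.2) (hact ⟨x.1, (x.2, w)⟩ l (a, u) (b, v))
  refine ⟨fun x l a b => ?_, fun x l a b => ?_, fun x l a b => ?_⟩
  · simpa [quadOp, quadMul] using key x l a b 1 0 0
  · simpa [quadOp, quadMul] using key x l a b 0 1 0
  · simpa [quadOp, quadMul] using key x l a b 0 0 1

theorem conds3_of_op_distrib (hdist : ∀ x y z : Σ l, G l × R,
      quadOp D f₁ f₂ R (quadOp D f₁ f₂ R x y) z =
        quadOp D f₁ f₂ R (quadOp D f₁ f₂ R x z) (quadOp D f₁ f₂ R y z)) :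
    (∀ x y z : Σ l, G l,
      f₁ (D.op x y) z * f₁ x y = f₁ (D.op x z) (D.op y z) * f₁ x z) ∧
    (∀ x y z : Σ l, G l,
      f₁ (D.op x y) z * f₂ x y = f₂ (D.op x z) (D.op y z) * f₁ y z) ∧
    (∀ x y z : Σ l, G l, f₂ (D.op x y) z =
      f₁ (D.op x z) (D.op y z) * f₂ x z + f₂ (D.op x z) (D.op y z) * f₂ y z) := by
  have key (x y z : Σ l, G l) (p q r : R) :=
    congrArg (fun z => z.2.2) (hdist ⟨x.1, (x.2, p)⟩ ⟨y.1, (y.2, q)⟩ ⟨z.1, (z.2, r)⟩)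
  refine ⟨fun x y z => ?_, fun x y z => ?_, fun x y z => ?_⟩
  · simpa [quadOp] using key x y z 1 0 0
  · simpa [quadOp] using key x y z 0 1 0
  · simpa [quadOp] using key x y z 0 0 1

theorem snd_quadOp_quadMul (hmul : ∀ (l : Λ) (p q : G l × R) (x : Σ l, G l × R),
      ∃ (m : Λ) (p' q' : G m × R),
        quadOp D f₁ f₂ R ⟨l, p⟩ x = ⟨m, p'⟩ ∧ quadOp D f₁ f₂ R ⟨l, q⟩ x = ⟨m, q'⟩ ∧
          quadOp D f₁ f₂ R ⟨l, quadMul D f₃ f₄ R l p q⟩ x = ⟨m, quadMul D f₃ f₄ R m p' q'⟩)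
    {l m : Λ} {a b : G l} {x : Σ l, G l} {a' b' : G m}
    (ha : D.op ⟨l, a⟩ x = ⟨m, a'⟩) (hb : D.op ⟨l, b⟩ x = ⟨m, b'⟩) (u v w : R) :
    f₁ ⟨l, D.mul l a b⟩ x * (f₃ l a b * u + f₄ l a b * v) + f₂ ⟨l, D.mul l a b⟩ x * w =
      f₃ m a' b' * (f₁ ⟨l, a⟩ x * u + f₂ ⟨l, a⟩ x * w) +
        f₄ m a' b' * (f₁ ⟨l, b⟩ x * v + f₂ ⟨l, b⟩ x * w) := by
  obtain ⟨k, c⟩ := x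
  obtain ⟨m₀, p', q', hp, hq, hpq⟩ := hmul l (a, u) (b, v) ⟨k, (c, w)⟩
  simp only [quadOp, quadMul, smul_eq_mul] at hp hq hpq
  rw [ha] at hp
  rw [hb] at hq
  obtain ⟨rfl, hp⟩ := Sigma.mk.inj_iff.mp hp
  obtain ⟨-, hq⟩ := Sigma.mk.inj_iff.mp hq
  rw [← eq_of_heq hp, ← eq_of_heq hq] at hpq
  exact congrArg (fun z => z.2.2) hpq

theorem conds4_of_mul_op (hmul : ∀ (l : Λ) (p q : G l × R) (x : Σ l, G l × R),
      ∃ (m : Λ) (p' q' : G m × R),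
        quadOp D f₁ f₂ R ⟨l, p⟩ x = ⟨m, p'⟩ ∧ quadOp D f₁ f₂ R ⟨l, q⟩ x = ⟨m, q'⟩ ∧
          quadOp D f₁ f₂ R ⟨l, quadMul D f₃ f₄ R l p q⟩ x = ⟨m, quadMul D f₃ f₄ R m p' q'⟩) :
    (∀ (l : Λ) (a b : G l) (x : Σ l, G l) (m : Λ) (a' b' : G m),
      D.op ⟨l, a⟩ x = ⟨m, a'⟩ → D.op ⟨l, b⟩ x = ⟨m, b'⟩ →
        f₁ ⟨l, D.mul l a b⟩ x * f₃ l a b = f₃ m a' b' * f₁ ⟨l, a⟩ x) ∧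
    (∀ (l : Λ) (a b : G l) (x : Σ l, G l) (m : Λ) (a' b' : G m),
      D.op ⟨l, a⟩ x = ⟨m, a'⟩ → D.op ⟨l, b⟩ x = ⟨m, b'⟩ →
        f₁ ⟨l, D.mul l a b⟩ x * f₄ l a b = f₄ m a' b' * f₁ ⟨l, b⟩ x) ∧
    (∀ (l : Λ) (a b : G l) (x : Σ l, G l) (m : Λ) (a' b' : G m),
      D.op ⟨l, a⟩ x = ⟨m, a'⟩ → D.op ⟨l, b⟩ x = ⟨m, b'⟩ →
        f₂ ⟨l, D.mul l a b⟩ x = f₃ m a' b' * f₂ ⟨l, a⟩ x + f₄ m a' b' * f₂ ⟨l, b⟩ x) := by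
  refine ⟨fun l a b x m a' b' ha hb => ?_, fun l a b x m a' b' ha hb => ?_,
    fun l a b x m a' b' ha hb => ?_⟩
  · simpa using snd_quadOp_quadMul hmul ha hb 1 0 0
  · simpa using snd_quadOp_quadMul hmul ha hb 0 1 0
  · simpa using snd_quadOp_quadMul hmul ha hb 0 0 1

end MCQData

/-- if `⨆ (G l × R)` with `(x,u) ◁ (y,v) = (x ◁ y, f₁(x,y)u + f₂(x,y)v)`
and `(a,u)(b,v) = (ab, f₃(a,b)u + f₄(a,b)v)` is an MCQ (for some identity and
inversion data), then `(f₁,f₂,f₃,f₄)` satisfies conditions (0-i)--(4-iii). -/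
theorem mcq_gives_conds {Λ : Type u} {G : Λ → Type v} {R : Type w} [Ring R]
    (D : MCQData Λ G) (hD : D.IsMCQ)
    (f₁ f₂ : (Σ l, G l) → (Σ l, G l) → R) (f₃ f₄ : ∀ l : Λ, G l → G l → R)
    (h : ∃ (o : ∀ l : Λ, G l × R) (i : ∀ l : Λ, G l × R → G l × R),
      (MCQData.mk (MCQData.quadMul D f₃ f₄ R) o i (MCQData.quadOp D f₁ f₂ R) :
        MCQData Λ fun l => G l × R).IsMCQ) :
    MCQData.Conds D f₁ f₂ f₃ f₄ := by
  obtain ⟨o, i, hE⟩ := h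
  have h0 := MCQData.conds0_of_isGroupData hD.1 hE.1
  have hExt := MCQData.mk_quadMul_eq_quadExt hD.1 hE.1 ▸ hE
  obtain ⟨-, hconj, hid, hact, hdist, hmul⟩ := hExt
  obtain ⟨h1i, h1ii⟩ := MCQData.conds1_of_op_conj h0 hconj
  obtain ⟨h2ii, h2iii, h2iv⟩ := MCQData.conds2_of_op_mul hact
  obtain ⟨h3i, h3ii, h3iii⟩ := MCQData.conds3_of_op_distrib hdist
  exact ⟨h0, h1i, h1ii, MCQData.f₁_one_right hid, h2ii, h2iii, h2iv, h3i, h3ii, h3iii,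
    MCQData.conds4_of_mul_op hmul⟩
end

section
/- Let X = ⨆_{λ∈Λ} G_λ be a multiple conjugation quandle, R a ring, M a left R-module, and let (f₁,f₂,f₃,f₄) and (g₁,g₂,g₃,g₄) be quadruples of maps satisfying conditions (0-i)–(4-iii). If (f₁,f₂,f₃,f₄) ∼ (g₁,g₂,g₃,g₄), then there exists an MCQ isomorphism φ : X̃(f₁,f₂,f₃,f₄) → X̃(g₁,g₂,g₃,g₄) such that pr_X ∘ φ = pr_X, where pr_X : ⨆_{λ∈Λ} (G_λ × M) → X sends (x,u) to x. Concretely, φ(x,u) = (x, h(x)u) works, where h witnesses ∼. -/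
universe u v w x u' v'

namespace MCQData

variable {Λ : Type u} {G : Λ → Type v} {R : Type w} [Ring R]
  {M : Type x} [AddCommGroup M] [Module R M]

def rescale (h : (Σ l, G l) → Rˣ) (z : Σ l, G l × M) : Σ l, G l × M :=
  ⟨z.1, (z.2.1, h ⟨z.1, z.2.1⟩ • z.2.2)⟩

theorem rescale_quadOp (D : MCQData Λ G) {f₁ f₂ g₁ g₂ : (Σ l, G l) → (Σ l, G l) → R}
    {h : (Σ l, G l) → Rˣ}
    (h₁ : ∀ x y : Σ l, G l, (h (D.op x y) : R) * f₁ x y = g₁ x y * (h x : R))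
    (h₂ : ∀ x y : Σ l, G l, (h (D.op x y) : R) * f₂ x y = g₂ x y * (h y : R))
    (z w : Σ l, G l × M) :
    rescale h (quadOp D f₁ f₂ M z w) = quadOp D g₁ g₂ M (rescale h z) (rescale h w) := by
  simp only [rescale, quadOp, Units.smul_def, smul_add, smul_smul, h₁, h₂]

theorem rescale_quadMul (D : MCQData Λ G) {f₃ f₄ g₃ g₄ : ∀ l : Λ, G l → G l → R}
    {h : (Σ l, G l) → Rˣ}
    (h₃ : ∀ (l : Λ) (a b : G l),
      (h ⟨l, D.mul l a b⟩ : R) * f₃ l a b = g₃ l a b * (h ⟨l, a⟩ : R))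
    (h₄ : ∀ (l : Λ) (a b : G l),
      (h ⟨l, D.mul l a b⟩ : R) * f₄ l a b = g₄ l a b * (h ⟨l, b⟩ : R))
    (l : Λ) (p q : G l × M) :
    rescale h ⟨l, quadMul D f₃ f₄ M l p q⟩ =
      ⟨l, quadMul D g₃ g₄ M l (rescale h ⟨l, p⟩).2 (rescale h ⟨l, q⟩).2⟩ := by
  simp only [rescale, quadMul, Units.smul_def, smul_add, smul_smul, h₃, h₄]

theorem isMCQHom_rescale (D : MCQData Λ G) {f₁ f₂ g₁ g₂ : (Σ l, G l) → (Σ l, G l) → R}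
    {f₃ f₄ g₃ g₄ : ∀ l : Λ, G l → G l → R} {h : (Σ l, G l) → Rˣ}
    (h₁ : ∀ x y : Σ l, G l, (h (D.op x y) : R) * f₁ x y = g₁ x y * (h x : R))
    (h₂ : ∀ x y : Σ l, G l, (h (D.op x y) : R) * f₂ x y = g₂ x y * (h y : R))
    (h₃ : ∀ (l : Λ) (a b : G l),
      (h ⟨l, D.mul l a b⟩ : R) * f₃ l a b = g₃ l a b * (h ⟨l, a⟩ : R))
    (h₄ : ∀ (l : Λ) (a b : G l),
      (h ⟨l, D.mul l a b⟩ : R) * f₄ l a b = g₄ l a b * (h ⟨l, b⟩ : R)) :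
    IsMCQHom (quadExt D f₁ f₂ f₃ f₄ M) (quadExt D g₁ g₂ g₃ g₄ M) (rescale h) :=
  ⟨rescale_quadOp D h₁ h₂, fun l p q =>
    ⟨l, _, _, rfl, rfl, rescale_quadMul D h₃ h₄ l p q⟩⟩

theorem rescale_bijective (h : (Σ l, G l) → Rˣ) :
    Function.Bijective (rescale (M := M) h) :=
  Function.bijective_iff_has_inverse.2
    ⟨rescale h⁻¹, fun _ => by simp [rescale], fun _ => by simp [rescale]⟩

end MCQData

theorem quadRel_gives_iso_general {Λ : Type u} {G : Λ → Type v} {R : Type w} [Ring R]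
    (D : MCQData Λ G)
    (f₁ f₂ g₁ g₂ : (Σ l, G l) → (Σ l, G l) → R)
    (f₃ f₄ g₃ g₄ : ∀ l : Λ, G l → G l → R)
    (M : Type x) [AddCommGroup M] [Module R M]
    (hrel : MCQData.QuadRel D f₁ f₂ g₁ g₂ f₃ f₄ g₃ g₄) :
    ∃ φ : (Σ l, G l × M) → (Σ l, G l × M),
      MCQData.IsMCQHom (MCQData.quadExt D f₁ f₂ f₃ f₄ M)
        (MCQData.quadExt D g₁ g₂ g₃ g₄ M) φ ∧
      Function.Bijective φ ∧
      ∀ z : Σ l, G l × M, (⟨(φ z).1, (φ z).2.1⟩ : Σ l, G l) = ⟨z.1, z.2.1⟩ := by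
  obtain ⟨h, h₁, h₂, h₃, h₄⟩ := hrel
  exact ⟨MCQData.rescale h, MCQData.isMCQHom_rescale D h₁ h₂ h₃ h₄,
    MCQData.rescale_bijective h, fun _ => rfl⟩

/-- if `(f₁,f₂,f₃,f₄) ∼ (g₁,g₂,g₃,g₄)`, then there is an MCQ
isomorphism `φ : X̃(f₁,f₂,f₃,f₄) → X̃(g₁,g₂,g₃,g₄)` commuting with the projections
to `X` (given by `φ(x,u) = (x, h(x)u)`). -/
theorem quadRel_gives_iso {Λ : Type u} {G : Λ → Type v} {R : Type w} [Ring R]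
    (D : MCQData Λ G) (hD : D.IsMCQ)
    (f₁ f₂ g₁ g₂ : (Σ l, G l) → (Σ l, G l) → R)
    (f₃ f₄ g₃ g₄ : ∀ l : Λ, G l → G l → R)
    (hf : MCQData.Conds D f₁ f₂ f₃ f₄) (hg : MCQData.Conds D g₁ g₂ g₃ g₄)
    (M : Type x) [AddCommGroup M] [Module R M]
    (hrel : MCQData.QuadRel D f₁ f₂ g₁ g₂ f₃ f₄ g₃ g₄) :
    ∃ φ : (Σ l, G l × M) → (Σ l, G l × M),
      MCQData.IsMCQHom (MCQData.quadExt D f₁ f₂ f₃ f₄ M)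
        (MCQData.quadExt D g₁ g₂ g₃ g₄ M) φ ∧
      Function.Bijective φ ∧
      ∀ z : Σ l, G l × M, (⟨(φ z).1, (φ z).2.1⟩ : Σ l, G l) = ⟨z.1, z.2.1⟩ :=
  quadRel_gives_iso_general D f₁ f₂ g₁ g₂ f₃ f₄ g₃ g₄ M hrel
end

section
/- Let X = ⨆_{λ∈Λ} G_λ be a multiple conjugation quandle, R a ring, and let f₁, f₂ : X × X → R and f₃, f₄ : ⨆_{λ∈Λ} (G_λ × G_λ) → R satisfy conditions (0-i)–(4-iii). Define g₁, g₂ : X × X → R and g₃, g₄ : ⨆_λ (G_λ × G_λ) → R by g₁(x,y) = f₁(e_x, y), g₂(x,y) = f₃(x ◁ y, x⁻¹ ◁ y) f₂(x,y) f₃(e_y, y), g₃(a,b) = 1, and g₄(a,b) = f₁(e_a, a⁻¹), where e_x denotes the identity of the group component containing x. Then g₁, g₂, g₃, g₄ satisfy conditions (0-i)–(4-iii). -/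
universe u v w x u' v'

/-! The quadruple `(g₁, g₂, g₃, g₄)` is the gauge transform of `(f₁, f₂, f₃, f₄)` by
`h(x) = f₃(x, x⁻¹)`, a unit by (0-i) with inverse `f₃(e_x, x)`; that is,
`(f₁, f₂, f₃, f₄) ∼ (g₁, g₂, g₃, g₄)` in the sense of `QuadRel`.
Conditions (0-i)–(4-iii) survive every such gauge transformation: after substituting
`g = h · f · h⁻¹`, the factors `h⁻¹ h` between consecutive terms of each condition cancel,
leaving the condition for `f`. -/

theorem Units.mul_mul_inv_mul_mul_cancel {α : Type*} [Monoid α] (u : αˣ) (a p q b : α) :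
    a * p * ↑u⁻¹ * (↑u * q * b) = a * (p * q) * b := by
  simp only [mul_assoc, Units.inv_mul_cancel_left]

namespace MCQData

variable {Λ : Type u} {G : Λ → Type v} {R : Type w} [Ring R] {D : MCQData Λ G}

abbrev IsGroupData.group (hG : D.IsGroupData) (l : Λ) : Group (G l) where
  mul := D.mul l
  one := D.one l
  inv := D.inv l
  mul_assoc := hG.1 l
  one_mul := hG.2.1 l
  mul_one := hG.2.2.1 l
  inv_mul_cancel := hG.2.2.2.1 l

namespace IsGroupData

variable {l : Λ}

theorem mul_assoc (hG : D.IsGroupData) (a b c : G l) :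
    D.mul l (D.mul l a b) c = D.mul l a (D.mul l b c) :=
  hG.1 l a b c

theorem one_mul (hG : D.IsGroupData) (a : G l) : D.mul l (D.one l) a = a := hG.2.1 l a

theorem mul_one (hG : D.IsGroupData) (a : G l) : D.mul l a (D.one l) = a := hG.2.2.1 l a

theorem inv_mul_cancel (hG : D.IsGroupData) (a : G l) : D.mul l (D.inv l a) a = D.one l :=
  hG.2.2.2.1 l a

theorem mul_inv_cancel (hG : D.IsGroupData) (a : G l) : D.mul l a (D.inv l a) = D.one l :=
  hG.2.2.2.2 l a

theorem inv_inv (hG : D.IsGroupData) (a : G l) : D.inv l (D.inv l a) = a := by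
  let := hG.group l
  exact _root_.inv_inv a

theorem mul_inv_rev (hG : D.IsGroupData) (a b : G l) :
    D.inv l (D.mul l a b) = D.mul l (D.inv l b) (D.inv l a) := by
  let := hG.group l
  exact _root_.mul_inv_rev a b

theorem mul_inv_mul_eq_inv (hG : D.IsGroupData) (a b : G l) :
    D.mul l b (D.inv l (D.mul l a b)) = D.inv l a := by
  let := hG.group l
  show b * (a * b)⁻¹ = a⁻¹
  group

theorem eq_inv_of_mul_eq_one_right (hG : D.IsGroupData) {a b : G l}
    (h : D.mul l a b = D.one l) : b = D.inv l a := by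
  let := hG.group l
  exact _root_.eq_inv_of_mul_eq_one_right h

theorem eq_one_of_mul_self (hG : D.IsGroupData) {a : G l} (h : D.mul l a a = a) :
    a = D.one l := by
  let := hG.group l
  exact mul_eq_left.mp h

end IsGroupData

namespace IsMCQ

variable {l m : Λ} {x : Σ l, G l}

theorem isGroupData (hD : D.IsMCQ) : D.IsGroupData := hD.1

theorem op_mul (hD : D.IsMCQ) {a b : G l} {a' b' : G m} (ha : D.op ⟨l, a⟩ x = ⟨m, a'⟩)
    (hb : D.op ⟨l, b⟩ x = ⟨m, b'⟩) : D.op ⟨l, D.mul l a b⟩ x = ⟨m, D.mul m a' b'⟩ := by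
  obtain ⟨m₀, a₀, b₀, ha₀, hb₀, hab₀⟩ := hD.2.2.2.2.2 l a b x
  rw [ha] at ha₀
  rw [hb] at hb₀
  cases ha₀
  cases sigma_mk_injective hb₀
  exact hab₀

theorem eq_one_of_op_one (hD : D.IsMCQ) {d : G m} (h : D.op ⟨l, D.one l⟩ x = ⟨m, d⟩) :
    d = D.one m := by
  have hdd := hD.op_mul h h
  rw [hD.isGroupData.one_mul, h] at hdd
  exact hD.isGroupData.eq_one_of_mul_self (sigma_mk_injective hdd).symm

theorem op_inv (hD : D.IsMCQ) {a : G l} {c : G m} (h : D.op ⟨l, a⟩ x = ⟨m, c⟩) :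
    D.op ⟨l, D.inv l a⟩ x = ⟨m, D.inv m c⟩ := by
  obtain ⟨m₀, a₀, c', ha₀, hc', hac'⟩ := hD.2.2.2.2.2 l a (D.inv l a) x
  rw [h] at ha₀
  cases ha₀
  rw [hD.isGroupData.mul_inv_cancel] at hac'
  rw [hc', hD.isGroupData.eq_inv_of_mul_eq_one_right (hD.eq_one_of_op_one hac')]

end IsMCQ

section Gauge

variable {f₁ f₂ g₁ g₂ : (Σ l, G l) → (Σ l, G l) → R} {f₃ f₄ g₃ g₄ : ∀ l : Λ, G l → G l → R}

theorem Conds0.of_gauge (hG : D.IsGroupData) (hf : Conds0 D f₃ f₄) (h : (Σ l, G l) → Rˣ)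
    (h₃ : ∀ l a b, g₃ l a b = h ⟨l, D.mul l a b⟩ * f₃ l a b * ↑(h ⟨l, a⟩)⁻¹)
    (h₄ : ∀ l a b, g₄ l a b = h ⟨l, D.mul l a b⟩ * f₄ l a b * ↑(h ⟨l, b⟩)⁻¹) :
    Conds0 D g₃ g₄ := by
  obtain ⟨h0i, h0ii, h0iii, h0iv⟩ := hf
  refine ⟨fun l a b => ⟨?_, ?_⟩, fun l a b c => ?_, fun l a b c => ?_, fun l a b c => ?_⟩
  all_goals simp only [h₃, h₄, Units.mul_mul_inv_mul_mul_cancel]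
  · exact ((h _).isUnit.mul (h0i l a b).1).mul (h _)⁻¹.isUnit
  · exact ((h _).isUnit.mul (h0i l a b).2).mul (h _)⁻¹.isUnit
  · rw [h0ii, hG.mul_assoc]
  · rw [h0iii, hG.mul_assoc]
  · rw [h0iv, hG.mul_assoc]

theorem Conds.of_quadRel (hD : D.IsMCQ) (hf : Conds D f₁ f₂ f₃ f₄)
    (hfg : QuadRel D f₁ f₂ g₁ g₂ f₃ f₄ g₃ g₄) : Conds D g₁ g₂ g₃ g₄ := by
  obtain ⟨hf0, h1i, h1ii, h2i, h2ii, h2iii, h2iv, h3i, h3ii, h3iii, h4i, h4ii, h4iii⟩ := hf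
  obtain ⟨h, e₁, e₂, e₃, e₄⟩ := hfg
  simp only [← Units.mul_inv_eq_iff_eq_mul] at e₁ e₂ e₃ e₄
  have hG := hD.isGroupData
  have hconj := hD.2.1
  have hop_one := hD.2.2.1
  have hop_mul := hD.2.2.2.1
  have hdist := hD.2.2.2.2.1
  refine ⟨hf0.of_gauge hG h (fun l a b => (e₃ l a b).symm) (fun l a b => (e₄ l a b).symm),
    fun l a b => ?_, fun l a b => ?_, fun x l => ?_, fun x l a b => ?_, fun x l a b => ?_,
    fun x l a b => ?_, fun x y z => ?_, fun x y z => ?_, fun x y z => ?_,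
    fun l a b x m a' b' ha hb => ?_, fun l a b x m a' b' ha hb => ?_,
    fun l a b x m a' b' ha hb => ?_⟩
  all_goals simp only [← e₁, ← e₂, ← e₃, ← e₄, Units.mul_mul_inv_mul_mul_cancel]
  · rw [h1i, hconj, hG.mul_assoc]
  · rw [hG.mul_one, hG.mul_inv_cancel, Units.mul_mul_inv_mul_mul_cancel,
      Units.mul_mul_inv_mul_mul_cancel, h1ii, hconj, hG.mul_assoc, mul_add, add_mul, mul_neg,
      neg_mul]
  · rw [hop_one, h2i, mul_one, Units.mul_inv]
  · rw [hop_mul, h2ii]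
  · rw [hop_mul, h2iii]
  · rw [hop_mul, h2iv]
  · rw [hdist, h3i]
  · rw [hdist, h3ii]
  · rw [← add_mul, ← mul_add, hdist, h3iii]
  · rw [ha, Units.mul_mul_inv_mul_mul_cancel, hD.op_mul ha hb, h4i l a b x m a' b' ha hb]
  · rw [hb, Units.mul_mul_inv_mul_mul_cancel, hD.op_mul ha hb, h4ii l a b x m a' b' ha hb]
  · rw [ha, hb, Units.mul_mul_inv_mul_mul_cancel, Units.mul_mul_inv_mul_mul_cancel,
      ← add_mul, ← mul_add, hD.op_mul ha hb, h4iii l a b x m a' b' ha hb]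

end Gauge

section ReducedGauge

variable {f₁ f₂ g₂ : (Σ l, G l) → (Σ l, G l) → R} {f₃ f₄ : ∀ l : Λ, G l → G l → R} {l : Λ}

namespace Conds0

theorem f₃_apply_one (hG : D.IsGroupData) (hf : Conds0 D f₃ f₄) (a : G l) :
    f₃ l a (D.one l) = 1 := by
  obtain ⟨h0i, h0ii, -, -⟩ := hf
  have h := h0ii l a (D.one l) (D.one l)
  rw [hG.mul_one, hG.mul_one] at h
  exact (h0i l a (D.one l)).1.mul_eq_left.mp h

theorem f₃_one_mul_f₃_inv (hG : D.IsGroupData) (hf : Conds0 D f₃ f₄) (a : G l) :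
    f₃ l (D.one l) a * f₃ l a (D.inv l a) = 1 := by
  rw [← hG.mul_inv_cancel a, hf.2.1 l a (D.inv l a) a, hG.inv_mul_cancel, hf.f₃_apply_one hG]

theorem f₃_inv_mul_f₃ (hG : D.IsGroupData) (hf : Conds0 D f₃ f₄) (a b : G l) :
    f₃ l (D.mul l a b) (D.inv l (D.mul l a b)) * f₃ l a b = f₃ l a (D.inv l a) := by
  rw [hf.2.1 l a b, hG.mul_inv_mul_eq_inv]

theorem f₃_inv_mul_f₄ (hG : D.IsGroupData) (hf : Conds0 D f₃ f₄) (a b : G l) :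
    f₃ l (D.mul l a b) (D.inv l (D.mul l a b)) * f₄ l a b =
      f₄ l a (D.inv l a) * f₃ l (D.one l) (D.inv l a) * f₃ l b (D.inv l b) := by
  obtain ⟨-, h0ii, h0iii, -⟩ := hf
  rw [h0iii, hG.mul_inv_mul_eq_inv, hG.mul_inv_rev, ← h0ii, hG.mul_inv_cancel,
    _root_.mul_assoc]

end Conds0

theorem Conds.quadRel_reduced (hD : D.IsMCQ) (hf : Conds D f₁ f₂ f₃ f₄)
    (hg₂ : ∀ (l : Λ) (a : G l) (y : Σ l, G l) (m : Λ) (c c' : G m),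
      D.op ⟨l, a⟩ y = ⟨m, c⟩ → D.op ⟨l, D.inv l a⟩ y = ⟨m, c'⟩ →
        g₂ ⟨l, a⟩ y = f₃ m c c' * f₂ ⟨l, a⟩ y * f₃ y.1 (D.one y.1) y.2) :
    QuadRel D f₁ f₂ (fun x y => f₁ ⟨x.1, D.one x.1⟩ y) g₂ f₃ f₄ (fun _ _ _ => 1)
      (fun l a _ => f₁ ⟨l, D.one l⟩ ⟨l, D.inv l a⟩) := by
  obtain ⟨hf0, h1i, -, -, -, -, -, -, -, -, h4i, -, -⟩ := hf
  have hG := hD.isGroupData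
  refine ⟨fun z => (hf0.1 z.1 z.2 (D.inv z.1 z.2)).1.unit, fun ⟨l, a⟩ y => ?_,
    fun ⟨l, a⟩ y => ?_, fun l a b => ?_, fun l a b => ?_⟩
  all_goals simp only [IsUnit.unit_spec]
  · obtain ⟨m, c, hc⟩ : ∃ m c, D.op ⟨l, a⟩ y = ⟨m, c⟩ := ⟨_, _, rfl⟩
    have h := h4i l a (D.inv l a) y m c (D.inv m c) hc (hD.op_inv hc)
    rw [hG.mul_inv_cancel] at h
    rw [hc]
    exact h.symm
  · obtain ⟨m, c, hc⟩ : ∃ m c, D.op ⟨l, a⟩ y = ⟨m, c⟩ := ⟨_, _, rfl⟩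
    rw [hc, hg₂ l a y m c _ hc (hD.op_inv hc), _root_.mul_assoc _ (f₃ _ _ _),
      hf0.f₃_one_mul_f₃_inv hG, _root_.mul_one]
  · rw [_root_.one_mul, hf0.f₃_inv_mul_f₃ hG]
  · rw [hf0.f₃_inv_mul_f₄ hG, h1i, hG.inv_inv, hG.one_mul]

end ReducedGauge

end MCQData

/-- if `(f₁,f₂,f₃,f₄)` satisfies conditions (0-i)--(4-iii), then so
does the quadruple `(g₁,g₂,g₃,g₄)` with `g₁(x,y) = f₁(e_x, y)`,
`g₂(x,y) = f₃(x ◁ y, x⁻¹ ◁ y) f₂(x,y) f₃(e_y, y)`, `g₃(a,b) = 1`, and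
`g₄(a,b) = f₁(e_a, a⁻¹)`.  Here `g₂` is characterized through the decompositions
`x ◁ y = ⟨m, c⟩` and `x⁻¹ ◁ y = ⟨m, c'⟩` in a common component `G m`. -/
theorem reduced_quadruple_conds {Λ : Type u} {G : Λ → Type v} {R : Type w} [Ring R]
    (D : MCQData Λ G) (hD : D.IsMCQ)
    (f₁ f₂ : (Σ l, G l) → (Σ l, G l) → R) (f₃ f₄ : ∀ l : Λ, G l → G l → R)
    (hc : MCQData.Conds D f₁ f₂ f₃ f₄)
    (g₂ : (Σ l, G l) → (Σ l, G l) → R)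
    (hg₂ : ∀ (l : Λ) (a : G l) (y : Σ l, G l) (m : Λ) (c c' : G m),
      D.op ⟨l, a⟩ y = ⟨m, c⟩ → D.op ⟨l, D.inv l a⟩ y = ⟨m, c'⟩ →
        g₂ ⟨l, a⟩ y = f₃ m c c' * f₂ ⟨l, a⟩ y * f₃ y.1 (D.one y.1) y.2) :
    MCQData.Conds D (fun x y => f₁ ⟨x.1, D.one x.1⟩ y) g₂
      (fun _ _ _ => (1 : R)) (fun l a _ => f₁ ⟨l, D.one l⟩ ⟨l, D.inv l a⟩) :=
  MCQData.Conds.of_quadRel hD hc (hc.quadRel_reduced hD hg₂)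
end
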